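/- In Cliff(7), each of the 14 quadratic elements α in the list {x₂x₃−x₄x₅, x₄x₅−x₆x₇, x₃x₁−x₄x₆, x₄x₆−x₇x₅, x₁x₂−x₇x₄, x₇x₄−x₆x₅, x₅x₁−x₆x₂, x₆x₂−x₃x₇, x₁x₄−x₂x₇, x₂x₇−x₃x₆, x₇x₁−x₂x₄, x₂x₄−x₅x₃, x₁x₆−x₅x₂, x₅x₂−x₄x₃} satisfies α·(θ − ε) = 0. Consequently 1 does not lie in the left ideal generated by these 14 elements. -/
import Mathlib

noncomputable section
open CliffordAlgebra
/-- The negative-definite quadratic form on ℝⁿ. -/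
abbrev Qneg (n : ℕ) : QuadraticForm ℝ (Fin n → ℝ) :=
  QuadraticMap.weightedSumSquares ℝ (fun _ : Fin n => (-1 : ℝ))
/-- Cliff(n), the real Clifford algebra of the negative-definite form on ℝⁿ. -/
abbrev Cl (n : ℕ) := CliffordAlgebra (Qneg n)
/-- The standard anticommuting generators, each squaring to −1. -/
def e {n : ℕ} (i : Fin n) : Cl n := ι (Qneg n) (Pi.single i 1)
def x₁ : Cl 7 := e 0
def x₂ : Cl 7 := e 1
def x₃ : Cl 7 := e 2
def x₄ : Cl 7 := e 3
def x₅ : Cl 7 := e 4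
def x₆ : Cl 7 := e 5
def x₇ : Cl 7 := e 6
def θ : Cl 7 := x₁ * x₂ * x₃ * x₄ * x₅ * x₆ * x₇
def ε : Cl 7 := x₁*x₂*x₃ + x₁*x₄*x₅ + x₁*x₆*x₇ + x₂*x₄*x₆ + x₂*x₇*x₅ + x₃*x₇*x₄ + x₃*x₆*x₅
/-- The images of a basis of 𝔤₂ under the comoment map. -/
def g2gens : Set (Cl 7) :=
  {x₂*x₃ - x₄*x₅, x₄*x₅ - x₆*x₇, x₃*x₁ - x₄*x₆, x₄*x₆ - x₇*x₅, x₁*x₂ - x₇*x₄,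
   x₇*x₄ - x₆*x₅, x₅*x₁ - x₆*x₂, x₆*x₂ - x₃*x₇, x₁*x₄ - x₂*x₇, x₂*x₇ - x₃*x₆,
   x₇*x₁ - x₂*x₄, x₂*x₄ - x₅*x₃, x₁*x₆ - x₅*x₂, x₅*x₂ - x₄*x₃}

lemma ortho {i j : Fin 7} (h : i ≠ j) :
    (Qneg 7).IsOrtho (Pi.single i 1) (Pi.single j 1) := by
  simp only [QuadraticMap.IsOrtho, QuadraticMap.weightedSumSquares_apply]
  rw [← Finset.sum_add_distrib]
  congr 1
  ext k
  rcases eq_or_ne k i with rfl | hki <;> rcases eq_or_ne k j with rfl | hkj <;>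
    simp_all [Pi.single_apply]

lemma ee (i : Fin 7) : e i * e i = -1 := by
  rw [e, ι_sq_scalar]
  have : Qneg 7 (Pi.single i 1) = -1 := by
    simp [QuadraticMap.weightedSumSquares_apply, Pi.single_apply]
  rw [this, map_neg, map_one]

lemma ee' (i : Fin 7) (t : Cl 7) : e i * (e i * t) = -t := by
  rw [← mul_assoc, ee, neg_one_mul]

lemma eswap {i j : Fin 7} (h : j < i) : e i * e j = -(e j * e i) :=
  ι_mul_ι_comm_of_isOrtho (ortho (Fin.ne_of_gt h))

lemma eswap' {i j : Fin 7} (h : j < i) (t : Cl 7) :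
    e i * (e j * t) = -(e j * (e i * t)) :=
  ι_mul_ι_mul_of_isOrtho _ (ortho (Fin.ne_of_gt h))

lemma key : ∀ α ∈ g2gens, α * (θ - ε) = 0 := by
  intro α hα
  simp only [g2gens, Set.mem_insert_iff, Set.mem_singleton_iff] at hα
  obtain rfl|rfl|rfl|rfl|rfl|rfl|rfl|rfl|rfl|rfl|rfl|rfl|rfl|rfl := hα <;>
  · simp only [θ, ε, x₁, x₂, x₃, x₄, x₅, x₆, x₇, sub_mul, mul_sub, mul_add, mul_assoc]
    simp (config := { decide := true }) only [ee, ee', eswap, eswap',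
      mul_neg, neg_mul, neg_neg, mul_one, one_mul]
    abel

/-- Right multiplication by `θ - ε`, as a left `Cl 7`-module map. -/
def rmul : Cl 7 →ₗ[Cl 7] Cl 7 where
  toFun x := x * (θ - ε)
  map_add' a b := add_mul a b _
  map_smul' a b := by simp [smul_eq_mul, mul_assoc]

def d (i : Fin 7) : Module.Dual ℝ (Fin 7 → ℝ) := LinearMap.proj i

lemma contract_single (i j : Fin 7) : d j (Pi.single i 1) = if i = j then 1 else 0 := by
  simp [d, Pi.single_apply, eq_comm]

lemma contract_e_mul (j i : Fin 7) (x : Cl 7) :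
    contractLeft (d j) (e i * x) =
      (if i = j then (1:ℝ) else 0) • x - e i * (contractLeft (d j) x) := by
  rw [e, contractLeft_ι_mul, contract_single]

lemma contract_e (j i : Fin 7) :
    contractLeft (Q := Qneg 7) (d j) (e i) = if i = j then 1 else 0 := by
  rw [e, contractLeft_ι, contract_single, apply_ite (algebraMap ℝ (Cl 7)), map_one, map_zero]

set_option maxHeartbeats 1000000 in
lemma Fθ : (contractLeft (Q := Qneg 7) (d 0))
      ((contractLeft (d 1)) ((contractLeft (d 2)) ((contractLeft (d 3))
      ((contractLeft (d 4)) ((contractLeft (d 5)) ((contractLeft (d 6)) θ)))))) = -1 := by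
  simp only [θ, x₁, x₂, x₃, x₄, x₅, x₆, x₇, mul_assoc]
  simp (config := { decide := true }) only [contract_e_mul, contract_e, map_neg, if_true, if_false,
    one_smul, zero_smul, smul_neg, mul_one, mul_zero, sub_zero, zero_sub, neg_neg, mul_neg,
    neg_zero]

set_option maxHeartbeats 1000000 in
lemma Fε : (contractLeft (Q := Qneg 7) (d 0))
      ((contractLeft (d 1)) ((contractLeft (d 2)) ((contractLeft (d 3))
      ((contractLeft (d 4)) ((contractLeft (d 5)) ((contractLeft (d 6)) ε)))))) = 0 := by
  simp only [ε, x₁, x₂, x₃, x₄, x₅, x₆, x₇, mul_assoc, map_add]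
  simp (config := { decide := true }) only [contract_e_mul, contract_e, map_neg, map_add,
    map_zero, map_sub, if_true, if_false, one_smul, zero_smul, smul_neg, smul_zero, mul_one,
    mul_zero, sub_zero, zero_sub, sub_self, neg_neg, mul_neg, neg_zero, add_zero, zero_add,
    neg_add_cancel, add_neg_cancel]

lemma theta_ne_eps : θ ≠ ε := by
  intro h
  have : (-1 : Cl 7) = 0 := by rw [← Fθ, h, Fε]
  exact one_ne_zero (neg_eq_zero.mp this)

theorem stmt_13 :
    (∀ α ∈ g2gens, α * (θ - ε) = 0) ∧
    (1 : Cl 7) ∉ Submodule.span (Cl 7) g2gens := by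
  refine ⟨key, fun h1 => ?_⟩
  have hker : Submodule.span (Cl 7) g2gens ≤ LinearMap.ker rmul :=
    Submodule.span_le.2 fun α hα => key α hα
  have h0 : rmul 1 = 0 := hker h1
  have hθε : θ = ε := by
    have h0' : (1 : Cl 7) * (θ - ε) = 0 := h0
    rw [one_mul, sub_eq_zero] at h0'
    exact h0'
  exact theta_ne_eps hθε
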